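/- arXiv:2406.15012 — 9 statements merged into one kernel-verified Lean document; each statement's English description precedes it below -/
import Mathlib

section
/- Let v = ⟨v₁,…,vₙ⟩ be a list of distinct nodes from a finite set V with score S(v) = Σ_{j=1}^n ŝ(vⱼ, {v_{j+1},…,vₙ} ∪ D) where D = V \ {v₁,…,vₙ} is an arbitrary fixed set disjoint from the list (take D = ∅ for right suborders). If v maximises S among all orderings of the set {v₁,…,vₙ}, then the tail ⟨v₂,…,vₙ⟩ maximises S among all orderings of {v₂,…,vₙ}. -/
open Finset

noncomputable def shat {V : Type*} [DecidableEq V] (σ : V → Finset V → ℝ) (v : V) (S : Finset V) : ℝ :=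
  S.powerset.sup' S.powerset_nonempty (σ v)

noncomputable def scoreL {V : Type*} [DecidableEq V] (σ : V → Finset V → ℝ) : List V → Finset V → ℝ
  | [], _ => 0
  | v :: t, D => shat σ v (t.toFinset ∪ D) + scoreL σ t D

noncomputable def sstar {V : Type*} [DecidableEq V] (σ : V → Finset V → ℝ) (A B : Finset V) : ℝ :=
  sSup ((fun l => scoreL σ l B) '' {l : List V | l.Nodup ∧ l.toFinset = A})


/-- If ⟨v₁,…,vₙ⟩ maximises the order score (with fixed disjoint dormant set D as extra
potential parents) among all orderings of its node set, then the tail ⟨v₂,…,vₙ⟩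
maximises the score among all orderings of its node set. -/
theorem tail_of_optimal_is_optimal {V : Type*} [DecidableEq V]
    (σ : V → Finset V → ℝ) (v₁ : V) (t : List V)
    (hnd : (v₁ :: t).Nodup) (D : Finset V) (hD : ∀ x ∈ v₁ :: t, x ∉ D)
    (hopt : ∀ l : List V, l.Perm (v₁ :: t) → scoreL σ l D ≤ scoreL σ (v₁ :: t) D) :
    ∀ l : List V, l.Perm t → scoreL σ l D ≤ scoreL σ t D := by
  intro l hl
  have h := hopt (v₁ :: l) (hl.cons v₁)
  have hfin : l.toFinset = t.toFinset := by
    ext x; simp [hl.mem_iff]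
  simpa [scoreL, hfin] using h
end

section
/- With the setup of order scores, if a right order ⟨v_n,…,v₁⟩ (front node v_n, reading towards the back) is optimal on its node set U, then for every 1 ≤ k ≤ n the right suborder ⟨v_{n-k},…,v₁⟩ obtained by deleting the k front-most nodes is optimal on U \ {v_{n-k+1},…,v_n}. -/
open Finset

/-- If a right order (front node first, each node's potential parents are the nodes
behind it, i.e. later in the list) is optimal on its node set, then deleting the k
front-most nodes leaves an optimal right order on the remaining node set. -/
theorem drop_of_optimal_right_order {V : Type*} [DecidableEq V]
    (σ : V → Finset V → ℝ) (l : List V) (hnd : l.Nodup)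
    (hopt : ∀ m : List V, m.Perm l → scoreL σ m ∅ ≤ scoreL σ l ∅)
    (k : ℕ) (hk1 : 1 ≤ k) (hk : k ≤ l.length) :
    ∀ m : List V, m.Perm (l.drop k) → scoreL σ m ∅ ≤ scoreL σ (l.drop k) ∅ := by
  intro m hm
  have key : ∀ (a b : List V) (D : Finset V),
      scoreL σ (a ++ b) D = scoreL σ a (b.toFinset ∪ D) + scoreL σ b D := by
    intro a
    induction a with
    | nil => intro b D; simp [scoreL]
    | cons v t ih =>
      intro b D
      simp only [List.cons_append, scoreL, ih, List.append_eq, List.toFinset_append,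
        Finset.union_assoc]
      ring
  have hperm : (l.take k ++ m).Perm l := by
    calc (l.take k ++ m).Perm (l.take k ++ l.drop k) := (hm.append_left _)
    _ = l := List.take_append_drop k l
  have h := hopt (l.take k ++ m) hperm
  rw [key] at h
  conv_rhs at h => rw [← List.take_append_drop k l, key]
  rw [List.toFinset_eq_of_perm _ _ hm] at h
  linarith
end

section
/- Every full optimal order on V can be built by starting from the empty order and repeatedly adding a node to the front, at each step only keeping orders in which the newly added front node is optimally placed. Formally: define M₀ = {empty order} and Mₙ = the set of right orders of length n obtained by prepending a node h to some order in M_{n-1}, subject to the condition that placing h at the front maximises the score among all insertion positions of h into that order. Then for every n ≤ |V|, Mₙ contains a suborder (the last-n-nodes suffix) of some globally optimal full order. -/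
open Finset

def Mset {V : Type*} [DecidableEq V] (σ : V → Finset V → ℝ) : ℕ → Set (List V)
  | 0 => {[]}
  | n + 1 => {l | ∃ (h : V) (m : List V), m ∈ Mset σ n ∧ h ∉ m ∧ l = h :: m ∧
      ∀ k ≤ m.length, scoreL σ (m.insertIdx k h) ∅ ≤ scoreL σ (h :: m) ∅}

lemma scoreL_append {V : Type*} [DecidableEq V] (σ : V → Finset V → ℝ) (a b : List V)
    (D : Finset V) : scoreL σ (a ++ b) D = scoreL σ a (b.toFinset ∪ D) + scoreL σ b D := by
  induction a with
  | nil => simp [scoreL]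
  | cons v t ih =>
    simp only [List.cons_append, scoreL, ih, List.append_eq, List.toFinset_append, union_assoc]
    ring

lemma exists_opt {V : Type*} [DecidableEq V] [Fintype V] (σ : V → Finset V → ℝ) :
    ∃ w : List V, w.Nodup ∧ w.toFinset = Finset.univ ∧
      (∀ w' : List V, w'.Nodup → w'.toFinset = Finset.univ →
        scoreL σ w' ∅ ≤ scoreL σ w ∅) := by
  classical
  set L : List V := (Finset.univ : Finset V).toList
  set s : Finset (List V) := L.permutations.toFinset
  have hLmem : L ∈ s := by simp [s, List.mem_permutations]
  obtain ⟨w, hws, hwmax⟩ := Finset.exists_max_image s (fun l => scoreL σ l ∅) ⟨L, hLmem⟩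
  have hperm : w.Perm L := by simpa [s, List.mem_permutations] using hws
  have hLnd : L.Nodup := Finset.nodup_toList _
  have hLfin : L.toFinset = (Finset.univ : Finset V) := Finset.toList_toFinset _
  refine ⟨w, hperm.nodup_iff.mpr hLnd, (List.toFinset_eq_of_perm _ _ hperm).trans hLfin, ?_⟩
  intro w' hnd hfin
  refine hwmax w' ?_
  have : w'.Perm L := List.perm_of_nodup_nodup_toFinset_eq hnd hLnd (hfin.trans hLfin.symm)
  simpa [s, List.mem_permutations] using this

/-- For every n ≤ |V|, Mₙ contains the length-n suffix of some globally
optimal full order of V. -/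
theorem Mset_contains_suffix_of_optimal {V : Type*} [DecidableEq V] [Fintype V]
    (σ : V → Finset V → ℝ) (n : ℕ) (hn : n ≤ Fintype.card V) :
    ∃ w : List V, w.Nodup ∧ w.toFinset = Finset.univ ∧
      (∀ w' : List V, w'.Nodup → w'.toFinset = Finset.univ →
        scoreL σ w' ∅ ≤ scoreL σ w ∅) ∧
      w.drop (w.length - n) ∈ Mset σ n := by
  classical
  obtain ⟨w, hnd, hfin, hopt⟩ := exists_opt σ
  refine ⟨w, hnd, hfin, hopt, ?_⟩
  have hlen : w.length = Fintype.card V := by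
    have h2 := List.toFinset_card_of_nodup hnd
    rw [hfin] at h2
    simpa using h2.symm
  induction n with
  | zero => simp [Mset]
  | succ n ih =>
    have hn' : n ≤ Fintype.card V := Nat.le_of_succ_le hn
    have ihm := ih hn'
    have hlt : w.length - (n + 1) < w.length := by omega
    set j := w.length - (n + 1) with hj
    have hdrop : w.drop j = w[j] :: w.drop (j + 1) := List.drop_eq_getElem_cons hlt
    have hj1 : j + 1 = w.length - n := by omega
    set h := w[j] with hh
    set m := w.drop (w.length - n) with hm
    have hdm : w.drop j = h :: m := by rw [hdrop, hj1]
    have hsplit : w = w.take j ++ (h :: m) := by rw [← hdm, List.take_append_drop]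
    have hndm : (h :: m).Nodup := by
      rw [← hdm]; exact hnd.sublist (List.drop_sublist _ _)
    refine ⟨h, m, ihm, (List.nodup_cons.mp hndm).1, hdm, ?_⟩
    intro k hk
    -- consider the rearranged list
    set w' := w.take j ++ m.insertIdx k h with hw'
    have hpermsuf : (m.insertIdx k h).Perm (h :: m) := List.perm_insertIdx h m hk
    have hperm : w'.Perm w := by
      rw [hsplit]; exact (hpermsuf.append_left _)
    have hw'nd : w'.Nodup := hperm.nodup_iff.mpr hnd
    have hw'fin : w'.toFinset = Finset.univ := by
      rw [List.toFinset_eq_of_perm _ _ hperm]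
      rw [← hfin]
    have hle : scoreL σ w' ∅ ≤ scoreL σ w ∅ := hopt w' hw'nd hw'fin
    rw [hw', scoreL_append] at hle
    conv_rhs at hle => rw [hsplit, scoreL_append]
    rwa [List.toFinset_eq_of_perm _ _ hpermsuf, add_le_add_iff_left] at hle
end

section
/- (Subadditivity over a partition of dormant nodes.) Let ⟨v_n,…,v₁⟩ be a right order with dormant set D = V \ {v₁,…,vₙ}, and let D = a ∪ b be a partition of D. Let S*(A | B) denote the maximal total score over orderings of a set A when every node of A may additionally take all of B as potential parents, i.e. S*(A|B) = max over orderings ⟨a₁,…,a_m⟩ of A of Σᵢ ŝ(aᵢ, {a_{i+1},…,a_m} ∪ B). Then S*(a ∪ b | {v_n,…,v₁}) ≤ S*(a | b ∪ {v_n,…,v₁}) + S*(b | a ∪ {v_n,…,v₁}). -/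
open Finset

lemma shat_mono {V : Type*} [DecidableEq V] (σ : V → Finset V → ℝ) (v : V) {S T : Finset V}
    (h : S ⊆ T) : shat σ v S ≤ shat σ v T := by
  apply Finset.sup'_le
  intro P hP
  exact Finset.le_sup' (σ v) (Finset.mem_powerset.mpr ((Finset.mem_powerset.mp hP).trans h))

lemma setFinite {V : Type*} [DecidableEq V] (A : Finset V) :
    ({l : List V | l.Nodup ∧ l.toFinset = A} : Set (List V)).Finite := by
  apply Set.Finite.subset (Set.finite_range (fun p : {x // x ∈ A.toList.permutations} => (p : List V)))
  rintro m ⟨hnd, hfs⟩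
  have : List.Perm m A.toList := by
    apply List.perm_of_nodup_nodup_toFinset_eq hnd (Finset.nodup_toList A)
    rw [hfs, Finset.toList_toFinset]
  exact ⟨⟨m, List.mem_permutations.mpr this⟩, rfl⟩

lemma key {V : Type*} [DecidableEq V] (σ : V → Finset V → ℝ) (a b : Finset V) (hab : Disjoint a b) :
    ∀ (m : List V) (D : Finset V), (∀ x ∈ m, x ∈ a ∪ b) →
      scoreL σ m D ≤ scoreL σ (m.filter (· ∈ a)) (b ∪ D) + scoreL σ (m.filter (· ∈ b)) (a ∪ D)
  | [], D, _ => by simp [scoreL]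
  | v :: t, D, h => by
    have ht : ∀ x ∈ t, x ∈ a ∪ b := fun x hx => h x (List.mem_cons_of_mem v hx)
    have ih := key σ a b hab t D ht
    have hsub : ∀ (p q : Finset V), t.toFinset ∪ D ⊆ (t.filter (· ∈ a)).toFinset ∪ b ∪ D := by
      intro _ _ x hx
      simp only [Finset.mem_union, List.mem_toFinset, List.mem_filter] at hx ⊢
      rcases hx with hx | hx
      · rcases Finset.mem_union.mp (ht x hx) with h' | h'
        · exact Or.inl (Or.inl ⟨hx, by simpa using h'⟩)
        · exact Or.inl (Or.inr h')
      · exact Or.inr hx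
    have hsub' : t.toFinset ∪ D ⊆ (t.filter (· ∈ b)).toFinset ∪ a ∪ D := by
      intro x hx
      simp only [Finset.mem_union, List.mem_toFinset, List.mem_filter] at hx ⊢
      rcases hx with hx | hx
      · rcases Finset.mem_union.mp (ht x hx) with h' | h'
        · exact Or.inl (Or.inr h')
        · exact Or.inl (Or.inl ⟨hx, by simpa using h'⟩)
      · exact Or.inr hx
    rcases Finset.mem_union.mp (h v List.mem_cons_self) with hv | hv
    · have hf : (v :: t).filter (· ∈ a) = v :: t.filter (· ∈ a) := by
        simp [List.filter_cons, hv]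
      rw [hf]
      simp only [scoreL]
      have hmono : shat σ v (t.toFinset ∪ D) ≤
          shat σ v ((t.filter (· ∈ a)).toFinset ∪ (b ∪ D)) := by
        apply shat_mono
        rw [← Finset.union_assoc]
        exact hsub a b
      have hfb : (v :: t).filter (· ∈ b) = t.filter (· ∈ b) :=
        List.filter_cons_of_neg (by simpa using Finset.disjoint_left.mp hab hv)
      rw [hfb]
      linarith
    · have hf : (v :: t).filter (· ∈ b) = v :: t.filter (· ∈ b) := by
        simp [List.filter_cons, hv]
      rw [hf]
      simp only [scoreL]
      have hmono : shat σ v (t.toFinset ∪ D) ≤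
          shat σ v ((t.filter (· ∈ b)).toFinset ∪ (a ∪ D)) := by
        apply shat_mono
        rw [← Finset.union_assoc]
        exact hsub'
      have hfa : (v :: t).filter (· ∈ a) = t.filter (· ∈ a) :=
        List.filter_cons_of_neg (by simpa using Finset.disjoint_right.mp hab hv)
      rw [hfa]
      linarith

/-- Subadditivity over a partition of the dormant nodes of a right order. -/
theorem sstar_subadditive {V : Type*} [DecidableEq V] [Fintype V]
    (σ : V → Finset V → ℝ) (l : List V) (hnd : l.Nodup)
    (a b : Finset V) (hab : Disjoint a b)
    (hU : a ∪ b = Finset.univ \ l.toFinset) :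
    sstar σ (a ∪ b) l.toFinset ≤
      sstar σ a (b ∪ l.toFinset) + sstar σ b (a ∪ l.toFinset) := by
  set D := l.toFinset with hD
  have hne : ({m : List V | m.Nodup ∧ m.toFinset = a ∪ b} : Set (List V)).Nonempty :=
    ⟨(a ∪ b).toList, Finset.nodup_toList _, Finset.toList_toFinset _⟩
  apply csSup_le (hne.image _)
  rintro x ⟨m, ⟨hmnd, hmfs⟩, rfl⟩
  have hmem : ∀ y ∈ m, y ∈ a ∪ b := by
    intro y hy; rw [← hmfs]; exact List.mem_toFinset.mpr hy
  have hta : (m.filter (· ∈ a)).toFinset = a := by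
    ext y
    simp only [List.mem_toFinset, List.mem_filter, decide_eq_true_eq]
    constructor
    · rintro ⟨_, h⟩; exact h
    · intro hy
      exact ⟨by rw [← List.mem_toFinset, hmfs]; exact Finset.mem_union_left _ hy, hy⟩
  have htb : (m.filter (· ∈ b)).toFinset = b := by
    ext y
    simp only [List.mem_toFinset, List.mem_filter, decide_eq_true_eq]
    constructor
    · rintro ⟨_, h⟩; exact h
    · intro hy
      exact ⟨by rw [← List.mem_toFinset, hmfs]; exact Finset.mem_union_right _ hy, hy⟩
  have h1 : scoreL σ (m.filter (· ∈ a)) (b ∪ D) ≤ sstar σ a (b ∪ D) :=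
    le_csSup (((setFinite a).image _).bddAbove) ⟨_, ⟨hmnd.filter _, hta⟩, rfl⟩
  have h2 : scoreL σ (m.filter (· ∈ b)) (a ∪ D) ≤ sstar σ b (a ∪ D) :=
    le_csSup (((setFinite b).image _).bddAbove) ⟨_, ⟨hmnd.filter _, htb⟩, rfl⟩
  have := key σ a b hab m D hmem
  linarith
end

section
/- (No right gaps.) Let ⟨v_n,…,v₁⟩ be a right order with dormant set D = V \ {v₁,…,vₙ}. Suppose the score of v_n at the front is independent of the dormant nodes, i.e. ŝ(v_n, {v_{n-1},…,v₁}) = ŝ(v_n, D ∪ {v_{n-1},…,v₁}). Then the maximal score of a full order of V extending the right order ⟨v_{n-1},…,v₁⟩ is at most the maximal score of a full order extending ⟨v_n,…,v₁⟩. -/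
open Finset

lemma lemB {V : Type*} [DecidableEq V] (σ : V → Finset V → ℝ) (vn : V) (rest : List V)
    (D : Finset V) : ∀ b : List V,
    scoreL σ (b ++ rest) D + shat σ vn (rest.toFinset ∪ D) ≤ scoreL σ (b ++ vn :: rest) D
  | [] => by simp [scoreL, add_comm]
  | x :: b => by
    simp only [List.cons_append, scoreL, List.append_eq]
    have h1 : shat σ x ((b ++ rest).toFinset ∪ D) ≤ shat σ x ((b ++ vn :: rest).toFinset ∪ D) := by
      apply shat_mono
      apply Finset.union_subset_union_left
      intro y hy
      simp only [List.toFinset_append, List.toFinset_cons, Finset.mem_union,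
        Finset.mem_insert] at hy ⊢
      tauto
    have h2 := lemB σ vn rest D b
    linarith

lemma scoreL_congr {V : Type*} [DecidableEq V] (σ : V → Finset V → ℝ) :
    ∀ (a : List V) (l₁ l₂ : List V) (D : Finset V), l₁.toFinset = l₂.toFinset →
    scoreL σ l₁ D ≤ scoreL σ l₂ D →
    scoreL σ (a ++ l₁) D ≤ scoreL σ (a ++ l₂) D
  | [], _, _, _, _, h => h
  | x :: a, l₁, l₂, D, hfs, h => by
    simp only [List.cons_append, scoreL, List.append_eq]
    have : (a ++ l₁).toFinset = (a ++ l₂).toFinset := by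
      simp [List.toFinset_append, hfs]
    rw [this]
    exact add_le_add le_rfl (scoreL_congr σ a l₁ l₂ D hfs h)

/-- No right gaps: if the score of the front node vₙ of a right order is independent
of the dormant nodes, then the maximal score of a full order extending the right
order without vₙ is at most the maximal score of a full order extending it with vₙ. -/
theorem no_right_gaps {V : Type*} [DecidableEq V] [Fintype V]
    (σ : V → Finset V → ℝ) (vn : V) (rest : List V)
    (hnd : (vn :: rest).Nodup)
    (hindep : shat σ vn rest.toFinset =
      shat σ vn ((Finset.univ \ (vn :: rest).toFinset) ∪ rest.toFinset)) :
    sSup {x : ℝ | ∃ w : List V, w.Nodup ∧ w.toFinset = Finset.univ ∧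
        rest <:+ w ∧ x = scoreL σ w ∅} ≤
      sSup {x : ℝ | ∃ w : List V, w.Nodup ∧ w.toFinset = Finset.univ ∧
        (vn :: rest) <:+ w ∧ x = scoreL σ w ∅} := by
  obtain ⟨hvn, hrest⟩ := List.nodup_cons.1 hnd
  -- B is bounded above
  set B := {x : ℝ | ∃ w : List V, w.Nodup ∧ w.toFinset = Finset.univ ∧
      (vn :: rest) <:+ w ∧ x = scoreL σ w ∅} with hB
  have hBdd : BddAbove B := by
    apply Set.Finite.bddAbove
    apply Set.Finite.subset (Set.Finite.image (fun w => scoreL σ w ∅)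
      (List.finite_length_eq V (Fintype.card V)))
    rintro x ⟨w, hw1, hw2, _, rfl⟩
    refine ⟨w, ?_, rfl⟩
    simp only [Set.mem_setOf_eq]
    rw [← List.toFinset_card_of_nodup hw1, hw2, Finset.card_univ]
  -- A is nonempty
  have hAne : {x : ℝ | ∃ w : List V, w.Nodup ∧ w.toFinset = Finset.univ ∧
      rest <:+ w ∧ x = scoreL σ w ∅}.Nonempty := by
    refine ⟨scoreL σ ((Finset.univ \ rest.toFinset).toList ++ rest) ∅,
      (Finset.univ \ rest.toFinset).toList ++ rest, ?_, ?_, ⟨_, rfl⟩, rfl⟩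
    · refine List.Nodup.append (Finset.nodup_toList _) hrest ?_
      intro y hy hy'
      have := Finset.mem_toList.1 hy
      simp only [Finset.mem_sdiff] at this
      exact this.2 (List.mem_toFinset.2 hy')
    · ext y
      simp [List.mem_toFinset, Finset.mem_toList]
  apply csSup_le hAne
  rintro x ⟨w, hw1, hw2, ⟨u, rfl⟩, rfl⟩
  -- vn ∈ u
  have hvnu : vn ∈ u := by
    have : vn ∈ (u ++ rest).toFinset := hw2 ▸ Finset.mem_univ vn
    simp only [List.toFinset_append, Finset.mem_union, List.mem_toFinset] at this
    tauto
  obtain ⟨a, b, rfl⟩ := List.append_of_mem hvnu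
  -- the rearranged list
  set w' := a ++ (b ++ vn :: rest) with hw'
  have hperm : ((a ++ vn :: b) ++ rest).Perm w' := by
    rw [List.append_assoc, List.cons_append]
    exact List.Perm.append_left a List.perm_middle.symm
  have hvnb : vn ∉ b := by
    have : (vn :: b).Nodup := (hw1.sublist (by simp)).sublist (List.sublist_append_right a _)
    exact (List.nodup_cons.1 this).1
  -- score comparison
  have hle : scoreL σ ((a ++ vn :: b) ++ rest) ∅ ≤ scoreL σ w' ∅ := by
    rw [List.append_assoc, List.cons_append]
    apply scoreL_congr
    · ext y
      simp only [List.toFinset_cons, List.toFinset_append, Finset.mem_insert, Finset.mem_union]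
      tauto
    · -- scoreL σ (vn :: (b ++ rest)) ∅ ≤ scoreL σ (b ++ vn :: rest) ∅
      simp only [scoreL]
      have h1 : shat σ vn ((b ++ rest).toFinset ∪ ∅) ≤ shat σ vn rest.toFinset := by
        rw [hindep]
        apply shat_mono
        intro y hy
        simp only [Finset.union_empty, List.toFinset_append, Finset.mem_union,
          List.mem_toFinset, Finset.mem_sdiff, Finset.mem_univ, List.toFinset_cons,
          Finset.mem_insert, true_and] at hy ⊢
        by_cases hyr : y ∈ rest
        · tauto
        · rcases hy with hy | hy
          · left
            rintro (rfl | h)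
            · exact hvnb hy
            · exact hyr h
          · exact absurd hy hyr
      have h2 := lemB σ vn rest ∅ b
      rw [Finset.union_empty] at h2
      linarith
  refine le_trans hle (le_csSup hBdd ?_)
  exact ⟨w', hperm.nodup_iff.1 hw1, by rw [← hw2]; ext y; simp [hw'],
    ⟨a ++ b, by simp [hw']⟩, rfl⟩
end

section
/- (Divide criterion.) Let A and B be disjoint subsets of V. If for every a ∈ A, b ∈ B, every parent set Pa of a satisfies σ(a, Pa ∪ {b}) − σ(a, Pa \ {b}) ≤ 0, and symmetrically every parent set Pb of b satisfies σ(b, Pb ∪ {a}) − σ(b, Pb \ {a}) ≤ 0, then there exists a DAG of maximal score in which no edges connect A and B (in either direction). -/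
open Finset

/-- A DAG on V, given by the parent set of each node; acyclicity is expressed by the
absence of directed cycles in the parent relation. -/
structure DAG (V : Type*) [DecidableEq V] [Fintype V] where
  Pa : V → Finset V
  acyclic : ∀ i : V, ¬ Relation.TransGen (fun a b : V => a ∈ Pa b) i i

/-- The score of a DAG: sum of local scores of the nodes given their parents. -/
noncomputable def DAG.score {V : Type*} [DecidableEq V] [Fintype V]
    (G : DAG V) (σ : V → Finset V → ℝ) : ℝ :=
  ∑ i : V, σ i (G.Pa i)

instance DAG.finite {V : Type*} [DecidableEq V] [Fintype V] : Finite (DAG V) := by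
  apply Finite.of_injective (fun G : DAG V => G.Pa)
  intro G G' h
  cases G; cases G'; simpa using h

instance DAG.nonempty {V : Type*} [DecidableEq V] [Fintype V] : Nonempty (DAG V) := by
  refine ⟨⟨fun _ => ∅, ?_⟩⟩
  intro i h
  cases h with
  | single h => simp at h
  | tail _ h => simp at h

/-- Erasing a whole set of "bad" parents cannot decrease the score. -/
lemma sdiff_le_aux {V : Type*} [DecidableEq V] (σ : V → Finset V → ℝ) (a : V) (S : Finset V)
    (h : ∀ b ∈ S, ∀ Pa : Finset V,
      σ a (insert b Pa) - σ a (Pa.erase b) ≤ 0)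
    (P : Finset V) : σ a P ≤ σ a (P \ S) := by
  induction S using Finset.induction_on with
  | empty => simp
  | @insert b S hb ih =>
    have h1 : σ a P ≤ σ a (P \ S) := ih (fun c hc => h c (Finset.mem_insert_of_mem hc))
    have h2 := h b (Finset.mem_insert_self b S) (P \ S)
    have key : σ a (P \ S) ≤ σ a ((P \ S).erase b) := by
      by_cases hbP : b ∈ P \ S
      · have : insert b (P \ S) = P \ S := Finset.insert_eq_self.2 hbP
        rw [this] at h2; linarith
      · rw [Finset.erase_eq_of_notMem hbP]
    have : P \ insert b S = (P \ S).erase b := by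
      ext x
      simp [Finset.mem_erase, Finset.mem_sdiff, Finset.mem_insert]
      tauto
    rw [this]
    linarith

/-- Divide criterion: if including any node of B as a parent of any node of A never
increases the local score (for any parent set), and vice versa, then some DAG of
maximal score has no edges between A and B in either direction. -/
theorem divide_criterion {V : Type*} [DecidableEq V] [Fintype V]
    (σ : V → Finset V → ℝ) (A B : Finset V) (hAB : Disjoint A B)
    (hA : ∀ a ∈ A, ∀ b ∈ B, ∀ Pa : Finset V,
      σ a (insert b Pa) - σ a (Pa.erase b) ≤ 0)
    (hB : ∀ b ∈ B, ∀ a ∈ A, ∀ Pb : Finset V,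
      σ b (insert a Pb) - σ b (Pb.erase a) ≤ 0) :
    ∃ G : DAG V, (∀ G' : DAG V, G'.score σ ≤ G.score σ) ∧
      ∀ a ∈ A, ∀ b ∈ B, b ∉ G.Pa a ∧ a ∉ G.Pa b := by
  obtain ⟨G₀, hG₀⟩ := Finite.exists_max (fun G : DAG V => G.score σ)
  -- clean up G₀
  set Pa' : V → Finset V := fun i =>
    if i ∈ A then G₀.Pa i \ B else if i ∈ B then G₀.Pa i \ A else G₀.Pa i with hPa'
  have hsub : ∀ i, Pa' i ⊆ G₀.Pa i := by
    intro i
    simp only [hPa']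
    split_ifs <;> first | exact Finset.sdiff_subset | rfl
  have hacyc : ∀ i : V, ¬ Relation.TransGen (fun a b : V => a ∈ Pa' b) i i := by
    intro i hi
    exact G₀.acyclic i (Relation.TransGen.mono (fun a b hab => hsub b hab) i i hi)
  refine ⟨⟨Pa', hacyc⟩, ?_, ?_⟩
  · intro G'
    have h1 : G'.score σ ≤ G₀.score σ := hG₀ G'
    have h2 : G₀.score σ ≤ DAG.score ⟨Pa', hacyc⟩ σ := by
      unfold DAG.score
      apply Finset.sum_le_sum
      intro i _
      simp only [hPa']
      split_ifs with hiA hiB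
      · exact sdiff_le_aux σ i B (fun b hb => hA i hiA b hb) _
      · exact sdiff_le_aux σ i A (fun a ha => hB i hiB a ha) _
      · rfl
    linarith
  · intro a ha b hb
    constructor
    · show b ∉ Pa' a
      simp only [hPa', if_pos ha]
      simp [hb]
    · show a ∉ Pa' b
      have hbA : b ∉ A := fun h => (Finset.disjoint_left.mp hAB h) hb
      simp only [hPa', if_neg hbA, if_pos hb]
      simp [ha]
end

section
/- (Equality of tree lower bound and matching upper bound for matchings.) Suppose the optimal DAG is a matching M, and for unmatched nodes u we have ŝ(u, V\{u}) = ŝ(u, ∅), and for matched pairs {i,j}: ŝ(i, {j}) + ŝ(j, ∅) = S*({i,j} | V\{i,j}). Then Σ_{{i,j}∈M} F_{ij} + Σ_{v∈V} ŝ(v,∅) = Σ_{{i,j}∈M} G_{ij} + Σ_{v∈V} ŝ(v, V\{v}), i.e. the lower bound computed from F over the matching equals the upper bound computed from G over the same matching. -/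
open Finset

/-- Equality of the tree lower bound and the matching upper bound when the optimal
DAG is a matching. The matching is encoded by an involution f : V → V
(f v = v means v is unmatched; otherwise {v, f v} is a matched pair), so each
sum over matched pairs appears with a factor 1/2. Here
F i j = ŝ(i,{j}) + ŝ(j,∅) − ŝ(i,∅) − ŝ(j,∅) and
G i j = S*({i,j} | V\{i,j}) − ŝ(i,V\{i}) − ŝ(j,V\{j}). -/
theorem matching_bounds_equal {V : Type*} [DecidableEq V] [Fintype V]
    (σ : V → Finset V → ℝ) (f : V → V) (hinv : Function.Involutive f)
    (hswap : ∀ i j : V, shat σ i {j} + shat σ j ∅ = shat σ j {i} + shat σ i ∅)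
    (hunmatched : ∀ u : V, f u = u →
      shat σ u (Finset.univ \ {u}) = shat σ u ∅)
    (hpair : ∀ i : V, f i ≠ i →
      shat σ i {f i} + shat σ (f i) ∅ =
        sstar σ {i, f i} (Finset.univ \ {i, f i})) :
    (1 / 2 : ℝ) * ∑ v ∈ Finset.univ.filter (fun v => f v ≠ v),
        (shat σ v {f v} + shat σ (f v) ∅ - shat σ v ∅ - shat σ (f v) ∅)
      + ∑ v : V, shat σ v ∅ =
    (1 / 2 : ℝ) * ∑ v ∈ Finset.univ.filter (fun v => f v ≠ v),
        (sstar σ {v, f v} (Finset.univ \ {v, f v})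
          - shat σ v (Finset.univ \ {v}) - shat σ (f v) (Finset.univ \ {f v}))
      + ∑ v : V, shat σ v (Finset.univ \ {v}) := by
  classical
  set M := Finset.univ.filter (fun v => f v ≠ v) with hM
  have hmem : ∀ v, v ∈ M ↔ f v ≠ v := by simp [hM]
  have hmap : ∀ g : V → ℝ, ∑ v ∈ M, g (f v) = ∑ v ∈ M, g v := by
    intro g
    refine Finset.sum_nbij' f f ?_ ?_ ?_ ?_ ?_ <;> intro v hv <;>
      simp only [hmem, hinv v] at * <;> tauto
  have hG : ∑ v ∈ M, (sstar σ {v, f v} (Finset.univ \ {v, f v})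
      - shat σ v (Finset.univ \ {v}) - shat σ (f v) (Finset.univ \ {f v}))
    = ∑ v ∈ M, ((shat σ v {f v} + shat σ (f v) ∅)
      - shat σ v (Finset.univ \ {v}) - shat σ (f v) (Finset.univ \ {f v})) := by
    refine Finset.sum_congr rfl fun v hv => ?_
    rw [← hpair v ((hmem v).1 hv)]
  have hF : ∑ v ∈ M, (shat σ v {f v} + shat σ (f v) ∅ - shat σ v ∅ - shat σ (f v) ∅)
    = ∑ v ∈ M, ((shat σ v {f v} + shat σ (f v) ∅) - shat σ v ∅ - shat σ (f v) ∅) := rfl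
  have hsplit : ∀ g : V → ℝ, ∑ v : V, g v
      = ∑ v ∈ M, g v + ∑ v ∈ Finset.univ.filter (fun v => ¬f v ≠ v), g v :=
    fun g => (Finset.sum_filter_add_sum_filter_not _ _ _).symm
  have hun : ∑ v ∈ Finset.univ.filter (fun v => ¬f v ≠ v), shat σ v (Finset.univ \ {v})
      = ∑ v ∈ Finset.univ.filter (fun v => ¬f v ≠ v), shat σ v ∅ := by
    refine Finset.sum_congr rfl fun v hv => ?_
    simp only [Finset.mem_filter, not_not] at hv
    exact hunmatched v hv.2
  rw [hG, hF, hsplit (fun v => shat σ v ∅),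
    hsplit (fun v => shat σ v (Finset.univ \ {v})), hun]
  have e1 : ∑ v ∈ M, ((shat σ v {f v} + shat σ (f v) ∅) - shat σ v ∅ - shat σ (f v) ∅)
      = ∑ v ∈ M, (shat σ v {f v} + shat σ (f v) ∅) - ∑ v ∈ M, shat σ v ∅
        - ∑ v ∈ M, shat σ (f v) ∅ := by
    rw [Finset.sum_sub_distrib, Finset.sum_sub_distrib]
  have e2 : ∑ v ∈ M, ((shat σ v {f v} + shat σ (f v) ∅)
      - shat σ v (Finset.univ \ {v}) - shat σ (f v) (Finset.univ \ {f v}))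
      = ∑ v ∈ M, (shat σ v {f v} + shat σ (f v) ∅)
        - ∑ v ∈ M, shat σ v (Finset.univ \ {v})
        - ∑ v ∈ M, shat σ (f v) (Finset.univ \ {f v}) := by
    rw [Finset.sum_sub_distrib, Finset.sum_sub_distrib]
  rw [e1, e2, hmap (fun v => shat σ v ∅),
    hmap (fun v => shat σ v (Finset.univ \ {v}))]
  ring
end

section
/- (Matching upper bound via pairwise scores.) For any partition Λ = {Λ₁,…,Λ_m} of a finite set U ⊆ V into parts, S*(U | V\U) ≤ Σ_{i=1}^m S*(Λᵢ | V\Λᵢ). In particular, for a partition of U into pairs and singletons (a matching on U), the sum of pairwise optimal scores S*({a,b} | V\{a,b}) plus Σ over singleton u of ŝ(u, V\{u}) is an upper bound on S*(U | V\U). -/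
open Finset

lemma sstar_bddAbove {V : Type*} [DecidableEq V] [Fintype V] (σ : V → Finset V → ℝ)
    (A B : Finset V) :
    BddAbove ((fun l => scoreL σ l B) '' {l : List V | l.Nodup ∧ l.toFinset = A}) := by
  apply Set.Finite.bddAbove
  apply Set.Finite.image
  apply Set.Finite.subset (List.finite_length_le V (Fintype.card V))
  intro l hl
  exact hl.1.length_le_card

lemma scoreL_le_sum {V : Type*} [DecidableEq V] [Fintype V] (σ : V → Finset V → ℝ)
    (U : Finset V) (Λ : Finset (Finset V))
    (hdisj : (Λ : Set (Finset V)).PairwiseDisjoint id)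
    (hsub : ∀ A ∈ Λ, A ⊆ U)
    (hcov : ∀ v ∈ U, ∃ A ∈ Λ, v ∈ A) :
    ∀ l : List V, (∀ v ∈ l, v ∈ U) →
      scoreL σ l (Finset.univ \ U) ≤
        ∑ A ∈ Λ, scoreL σ (l.filter (· ∈ A)) (Finset.univ \ A) := by
  intro l
  induction l with
  | nil => intro _; simp [scoreL]
  | cons v t ih =>
    intro hmem
    have hvU : v ∈ U := hmem v (by simp)
    obtain ⟨A₀, hA₀, hvA₀⟩ := hcov v hvU
    have hfilter : ∀ A ∈ Λ, A ≠ A₀ → (v :: t).filter (· ∈ A) = t.filter (· ∈ A) := by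
      intro A hA hne
      have hvA : v ∉ A := by
        intro hv
        exact Finset.disjoint_left.1 (hdisj hA hA₀ hne) hv hvA₀
      simp [List.filter_cons, hvA]
    have h0 : (v :: t).filter (· ∈ A₀) = v :: t.filter (· ∈ A₀) := by
      simp [List.filter_cons, hvA₀]
    rw [← Finset.add_sum_erase Λ _ hA₀, h0]
    have hsum : ∑ A ∈ Λ.erase A₀, scoreL σ ((v :: t).filter (· ∈ A)) (Finset.univ \ A)
        = ∑ A ∈ Λ.erase A₀, scoreL σ (t.filter (· ∈ A)) (Finset.univ \ A) := by
      apply Finset.sum_congr rfl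
      intro A hA
      rw [hfilter A (Finset.mem_of_mem_erase hA) (Finset.ne_of_mem_erase hA)]
    rw [hsum]
    have hmono : shat σ v (t.toFinset ∪ (Finset.univ \ U)) ≤
        shat σ v ((t.filter (· ∈ A₀)).toFinset ∪ (Finset.univ \ A₀)) := by
      apply shat_mono
      intro x hx
      rcases Finset.mem_union.1 hx with hx | hx
      · by_cases hxA : x ∈ A₀
        · exact Finset.mem_union_left _ (by
            rw [List.mem_toFinset, List.mem_filter]
            exact ⟨List.mem_toFinset.1 hx, by simpa using hxA⟩)
        · exact Finset.mem_union_right _ (by simp [hxA])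
      · have hxU : x ∉ U := (Finset.mem_sdiff.1 hx).2
        exact Finset.mem_union_right _ (Finset.mem_sdiff.2
          ⟨Finset.mem_univ x, fun h => hxU (hsub A₀ hA₀ h)⟩)
    have hrest : scoreL σ t (Finset.univ \ U) ≤
        scoreL σ (t.filter (· ∈ A₀)) (Finset.univ \ A₀) +
          ∑ A ∈ Λ.erase A₀, scoreL σ (t.filter (· ∈ A)) (Finset.univ \ A) :=
      calc scoreL σ t (Finset.univ \ U)
          ≤ ∑ A ∈ Λ, scoreL σ (t.filter (· ∈ A)) (Finset.univ \ A) :=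
            ih (fun x hx => hmem x (List.mem_cons_of_mem _ hx))
        _ = _ := (Finset.add_sum_erase Λ _ hA₀).symm
    simp only [scoreL]
    rw [add_assoc]
    exact add_le_add hmono hrest

/-- Matching upper bound via pairwise scores: for any partition Λ of U into
(nonempty, pairwise disjoint) parts, S*(U | V\U) ≤ Σ_{Λᵢ ∈ Λ} S*(Λᵢ | V\Λᵢ). -/
theorem sstar_partition_subadditive {V : Type*} [DecidableEq V] [Fintype V]
    (σ : V → Finset V → ℝ) (U : Finset V) (Λ : Finset (Finset V))
    (hne : ∀ A ∈ Λ, A.Nonempty)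
    (hdisj : (Λ : Set (Finset V)).PairwiseDisjoint id)
    (hcover : Λ.sup id = U) :
    sstar σ U (Finset.univ \ U) ≤
      ∑ A ∈ Λ, sstar σ A (Finset.univ \ A) := by
  have hsub : ∀ A ∈ Λ, A ⊆ U := by
    intro A hA
    rw [← hcover]
    exact Finset.le_sup (f := id) hA
  have hcov : ∀ v ∈ U, ∃ A ∈ Λ, v ∈ A := by
    intro v hv
    rw [← hcover] at hv
    simpa using Finset.mem_sup.1 hv
  apply csSup_le
  · exact ⟨scoreL σ U.toList (Finset.univ \ U),
      ⟨U.toList, ⟨U.nodup_toList, U.toList_toFinset⟩, rfl⟩⟩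
  rintro b ⟨l, ⟨hnd, hto⟩, rfl⟩
  have hl : ∀ v ∈ l, v ∈ U := fun v hv => by
    rw [← hto]; exact List.mem_toFinset.2 hv
  refine (scoreL_le_sum σ U Λ hdisj hsub hcov l hl).trans (Finset.sum_le_sum ?_)
  intro A hA
  apply le_csSup (sstar_bddAbove σ A (Finset.univ \ A))
  refine ⟨l.filter (· ∈ A), ⟨hnd.filter _, ?_⟩, rfl⟩
  ext x
  simp only [List.toFinset_filter, Finset.mem_filter, List.mem_toFinset]
  constructor
  · rintro ⟨-, hx⟩; simpa using hx
  · intro hx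
    have hx' : x ∈ l := by
      have h2 : x ∈ l.toFinset := by rw [hto]; exact hsub A hA hx
      exact List.mem_toFinset.1 h2
    exact ⟨hx', by simpa using hx⟩
end

section
/- (Suborder pruning keeps the optimum.) In the ordered power-set algorithm, at each stage n retain for each n-element subset S ⊆ V exactly one right order of S with maximal right-order score (breaking ties by a fixed rule). Then the single order retained at stage p = |V| is an optimal full order: its score equals max over all permutations w of V of Σⱼ ŝ(wⱼ, {w_{j+1},…,w_p}). -/
open Finset

/-- Suborder pruning keeps the optimum: if for each subset S of V we retain one
right order R S of S, built by prepending a node to a previously retained order,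
whose score is maximal among all such candidates, then the order retained for the
full vertex set is an optimal full order. -/
theorem suborder_pruning_keeps_optimum {V : Type*} [DecidableEq V] [Fintype V]
    (σ : V → Finset V → ℝ) (R : Finset V → List V)
    (hRord : ∀ S : Finset V, (R S).Nodup ∧ (R S).toFinset = S)
    (hRbuilt : ∀ S : Finset V, S.Nonempty → ∃ v ∈ S, R S = v :: R (S.erase v))
    (hRmax : ∀ S : Finset V, ∀ v ∈ S,
      scoreL σ (v :: R (S.erase v)) ∅ ≤ scoreL σ (R S) ∅) :
    ∀ w : List V, w.Nodup → w.toFinset = Finset.univ →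
      scoreL σ w ∅ ≤ scoreL σ (R Finset.univ) ∅ := by
  have key : ∀ l : List V, l.Nodup → scoreL σ l ∅ ≤ scoreL σ (R l.toFinset) ∅ := by
    intro l
    induction l with
    | nil =>
      intro _
      have h0 : R (([] : List V).toFinset) = [] := by
        have := (hRord (([] : List V).toFinset)).2
        simpa using List.toFinset_eq_empty_iff _ |>.mp (by simpa using this)
      rw [h0]
    | cons v t ih =>
      intro hnd
      have hvt : v ∉ t := (List.nodup_cons.mp hnd).1
      have htnd : t.Nodup := (List.nodup_cons.mp hnd).2
      have herase : (v :: t).toFinset.erase v = t.toFinset := by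
        rw [List.toFinset_cons, Finset.erase_insert (by simpa using hvt)]
      have hmem : v ∈ (v :: t).toFinset := by simp
      have hmax := hRmax ((v :: t).toFinset) v hmem
      rw [herase] at hmax
      refine le_trans ?_ hmax
      show shat σ v (t.toFinset ∪ ∅) + scoreL σ t ∅ ≤
        shat σ v ((R t.toFinset).toFinset ∪ ∅) + scoreL σ (R t.toFinset) ∅
      rw [(hRord t.toFinset).2]
      exact add_le_add_right (ih htnd) _
  intro w hnd huniv
  have := key w hnd
  rwa [huniv] at this
end
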